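/- arXiv:2602.15438 — 6 statements merged into one kernel-verified Lean document; each statement's English description precedes it below -/
import Mathlib

section
/- For all real x ≥ τ with 0 < τ ≤ 1/3, the inequality (log x)² ≤ 4 (log τ)² (x log x − x + 1) holds. -/
theorem log_sq_le_of_tau_le (τ x : ℝ) (hτ0 : 0 < τ) (hτ : τ ≤ 1/3) (hx : τ ≤ x) :
    (Real.log x)^2 ≤ 4 * (Real.log τ)^2 * (x * Real.log x - x + 1) := by
  have hx0 : 0 < x := lt_of_lt_of_le hτ0 hx
  set c := (Real.log τ)^2 with hc
  -- log 3 bounds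
  have h3e : Real.exp 1 < 3 := lt_of_lt_of_le Real.exp_one_lt_d9 (by norm_num)
  have hlog3_gt : 1 < Real.log 3 := (Real.lt_log_iff_exp_lt (by norm_num)).2 h3e
  have hlog3_le : Real.log 3 ≤ 5/4 := by
    rw [Real.log_le_iff_le_exp (by norm_num)]
    have h1 : Real.exp (5/4 : ℝ) = Real.exp 1 * Real.exp (1/4 : ℝ) := by
      rw [← Real.exp_add]; norm_num
    have h2 : (1:ℝ) + 1/4 ≤ Real.exp (1/4 : ℝ) := by
      have := Real.add_one_le_exp (1/4 : ℝ); linarith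
    have h3 := Real.exp_one_gt_d9
    nlinarith [Real.exp_pos (1/4 : ℝ)]
  have hlogτ : Real.log τ ≤ -1 := by
    have h1 : Real.log τ ≤ Real.log (1/3 : ℝ) := Real.log_le_log hτ0 hτ
    have h2 : Real.log (1/3 : ℝ) = - Real.log 3 := by
      rw [one_div, Real.log_inv]
    linarith
  have hc1 : 1 ≤ c := by nlinarith
  -- key endpoint inequality at τ
  have hτkey : 0 ≤ 4 * τ * Real.log τ - 4 * τ + 3 := by
    have h1 : Real.log (1/(3*τ)) ≤ 1/(3*τ) - 1 :=
      Real.log_le_sub_one_of_pos (by positivity)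
    have h2 : Real.log (1/(3*τ)) = - (Real.log 3 + Real.log τ) := by
      rw [one_div, Real.log_inv, Real.log_mul (by norm_num) hτ0.ne']
    rw [h2] at h1
    have h3 : - Real.log τ ≤ 1/(3*τ) - 1 + Real.log 3 := by linarith
    have h4 : τ * (- Real.log τ) ≤ τ * (1/(3*τ) - 1 + Real.log 3) :=
      mul_le_mul_of_nonneg_left h3 hτ0.le
    have h5 : τ * (1/(3*τ)) = 1/3 := by field_simp
    nlinarith
  set f : ℝ → ℝ := fun y => 4*c*(y*Real.log y - y + 1) - (Real.log y)^2 with hf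
  have hderiv : ∀ y : ℝ, 0 < y → HasDerivAt f (2*Real.log y*(2*c - 1/y)) y := by
    intro y hy
    have h1 : HasDerivAt (fun y : ℝ => y * Real.log y) (Real.log y + 1) y := by
      have := (hasDerivAt_id y).mul (Real.hasDerivAt_log hy.ne')
      exact this.congr_deriv (by simp [hy.ne'])
    have h2 : HasDerivAt (fun y : ℝ => (Real.log y)^2) (2 * Real.log y * (1/y)) y := by
      have := (Real.hasDerivAt_log hy.ne').fun_pow 2
      exact this.congr_deriv (by simp)
    have h3 : HasDerivAt f (4*c*((Real.log y + 1) - 1) - 2*Real.log y*(1/y)) y := by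
      exact ((((h1.sub (hasDerivAt_id y)).add_const 1).const_mul (4*c)).sub h2)
    convert h3 using 1
    field_simp
    ring
  have hf1 : f 1 = 0 := by simp [hf]
  have hfτ : 0 ≤ f τ := by
    have : f τ = c * (4 * τ * Real.log τ - 4 * τ + 3) := by
      simp only [hf]; ring
    rw [this]
    positivity
  -- goal is 0 ≤ f x
  have hgoal : 0 ≤ f x → (Real.log x)^2 ≤ 4 * c * (x * Real.log x - x + 1) := by
    intro h; simp only [hf] at h; linarith
  apply hgoal
  rcases le_or_gt 1 x with hx1 | hx1
  · -- x ≥ 1 : f monotone on [1, ∞)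
    have hmono : MonotoneOn f (Set.Ici 1) := by
      apply monotoneOn_of_deriv_nonneg (convex_Ici 1)
      · intro y hy
        exact ((hderiv y (lt_of_lt_of_le one_pos hy)).differentiableAt).continuousAt.continuousWithinAt
      · intro y hy
        rw [interior_Ici] at hy
        exact ((hderiv y (lt_trans one_pos hy)).differentiableAt).differentiableWithinAt
      · intro y hy
        rw [interior_Ici] at hy
        have hy1 : 1 < y := hy
        have hy0 : 0 < y := lt_trans one_pos hy1
        rw [(hderiv y hy0).deriv]
        have hly : 0 ≤ Real.log y := Real.log_nonneg hy1.le
        have : 1/y ≤ 1 := by rw [div_le_one hy0]; linarith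
        nlinarith
    have := hmono (Set.mem_Ici.2 le_rfl) (Set.mem_Ici.2 hx1) hx1
    linarith [hf1]
  · -- τ ≤ x < 1
    set m : ℝ := 1/(2*c) with hm
    have hm0 : 0 < m := by positivity
    have hm1 : m ≤ 1/2 := by
      rw [hm, div_le_div_iff₀ (by linarith) (by norm_num)]
      linarith
    rcases le_or_gt x m with hxm | hxm
    · -- τ ≤ x ≤ m : f monotone on [τ, m]
      have hmono : MonotoneOn f (Set.Icc τ m) := by
        apply monotoneOn_of_deriv_nonneg (convex_Icc τ m)
        · intro y hy
          exact ((hderiv y (lt_of_lt_of_le hτ0 hy.1)).differentiableAt).continuousAt.continuousWithinAt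
        · intro y hy
          rw [interior_Icc] at hy
          exact ((hderiv y (lt_trans hτ0 hy.1)).differentiableAt).differentiableWithinAt
        · intro y hy
          rw [interior_Icc] at hy
          have hy0 : 0 < y := lt_trans hτ0 hy.1
          rw [(hderiv y hy0).deriv]
          have hly : Real.log y ≤ 0 := Real.log_nonpos hy0.le (by linarith [hy.2])
          have h2c : 2*c ≤ 1/y := by
            rw [le_div_iff₀ hy0]
            have : y < 1/(2*c) := hy.2
            have h2c0 : (0:ℝ) < 2*c := by linarith
            calc 2*c*y ≤ 2*c*(1/(2*c)) := by
                  exact (mul_lt_mul_of_pos_left this h2c0).le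
              _ = 1 := by field_simp
          nlinarith
      have := hmono (Set.mem_Icc.2 ⟨le_rfl, le_trans hx hxm⟩) (Set.mem_Icc.2 ⟨hx, hxm⟩) hx
      linarith
    · -- m ≤ x ≤ 1 : f antitone on [m, 1]
      have hanti : AntitoneOn f (Set.Icc m 1) := by
        apply antitoneOn_of_deriv_nonpos (convex_Icc m 1)
        · intro y hy
          exact ((hderiv y (lt_of_lt_of_le hm0 hy.1)).differentiableAt).continuousAt.continuousWithinAt
        · intro y hy
          rw [interior_Icc] at hy
          exact ((hderiv y (lt_trans hm0 hy.1)).differentiableAt).differentiableWithinAt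
        · intro y hy
          rw [interior_Icc] at hy
          have hy0 : 0 < y := lt_trans hm0 hy.1
          rw [(hderiv y hy0).deriv]
          have hly : Real.log y ≤ 0 := Real.log_nonpos hy0.le hy.2.le
          have h2c : 1/y ≤ 2*c := by
            rw [div_le_iff₀ hy0]
            have : 1/(2*c) < y := hy.1
            have h2c0 : (0:ℝ) < 2*c := by linarith
            calc (1:ℝ) = 2*c*(1/(2*c)) := by field_simp
              _ ≤ 2*c*y := by nlinarith
          nlinarith
      have := hanti (Set.mem_Icc.2 ⟨hxm.le, hx1.le⟩) (Set.mem_Icc.2 ⟨by linarith, le_rfl⟩) hx1.le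
      linarith [hf1]
end

section
/- Let p and q be probability distributions on a finite set with p_i ≥ τ and q_i ≥ τ for all i, for some 0 < τ ≤ 1/3. Then ∑_i (log p_i − log q_i)² ≤ (4 (log τ)² / τ) · ∑_i p_i log(p_i / q_i). -/
/-!
Put `x = log (a / b)`. Then `a log (a / b) - a + b = b (eˣ (x - 1) + 1) = a (x - 1 + e⁻ˣ)`, and
`eˣ (x - 1) + 1 = ∫₀ˣ s eˢ ds` is at least `x² / 2` for `x ≥ 0` and `eˣ x² / 2` for `x ≤ 0`. Hence each term
of `∑ (pᵢ log (pᵢ / qᵢ) - pᵢ + qᵢ)`, which equals `KL(p‖q)`, is at least `τ (log pᵢ - log qᵢ)² / 2`.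
It remains to note that `2 ≤ 4 (log τ)²` because `τ ≤ 1/3 < e⁻¹`.
-/

open Real Finset

namespace Real

theorem sq_div_two_le_exp_mul_sub_one_add_one {x : ℝ} (hx : 0 ≤ x) :
    x ^ 2 / 2 ≤ exp x * (x - 1) + 1 := by
  let g : ℝ → ℝ := fun x ↦ exp x * (x - 1) + 1 - x ^ 2 / 2
  have hg : ∀ x, HasDerivAt g (x * (exp x - 1)) x := fun x ↦ by
    refine ((((hasDerivAt_exp x).mul ((hasDerivAt_id x).sub_const 1)).add_const 1).sub
      ((hasDerivAt_pow 2 x).div_const 2)).congr_deriv ?_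
    simp only [id, Nat.cast_ofNat]
    ring
  have hg_mono : Monotone g := by
    refine monotone_of_deriv_nonneg (fun x ↦ (hg x).differentiableAt) fun x ↦ ?_
    rw [(hg x).deriv]
    rcases le_total 0 x with h | h
    · exact mul_nonneg h (sub_nonneg.2 (one_le_exp h))
    · exact mul_nonneg_of_nonpos_of_nonpos h (sub_nonpos.2 (exp_le_one_iff.2 h))
  have := hg_mono hx
  simp only [g, exp_zero] at this
  linarith

theorem sq_div_two_le_sub_one_add_exp_neg {x : ℝ} (hx : x ≤ 0) :
    x ^ 2 / 2 ≤ x - 1 + exp (-x) := by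
  have := quadratic_le_exp_of_nonneg (neg_nonneg.2 hx)
  linarith

theorem min_mul_sq_log_sub_log_le {a b : ℝ} (ha : 0 < a) (hb : 0 < b) :
    min a b * (log a - log b) ^ 2 / 2 ≤ a * log (a / b) - a + b := by
  set x := log a - log b
  have hlog : log (a / b) = x := log_div ha.ne' hb.ne'
  have hexp : exp x = a / b := by rw [exp_sub, exp_log ha, exp_log hb]
  rw [hlog]
  rcases le_total b a with hba | hab
  · have hx : 0 ≤ x := sub_nonneg.2 (log_le_log hb hba)
    have key := mul_le_mul_of_nonneg_left (sq_div_two_le_exp_mul_sub_one_add_one hx) hb.le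
    rw [hexp, mul_add, ← mul_assoc, mul_div_cancel₀ a hb.ne'] at key
    rw [min_eq_right hba]
    linarith
  · have hx : x ≤ 0 := sub_nonpos.2 (log_le_log ha hab)
    have key := mul_le_mul_of_nonneg_left (sq_div_two_le_sub_one_add_exp_neg hx) ha.le
    rw [exp_neg, hexp, inv_div, mul_add, mul_div_cancel₀ b ha.ne'] at key
    rw [min_eq_left hab]
    linarith

theorem log_le_neg_one_of_le_one_third {τ : ℝ} (hτ0 : 0 < τ) (hτ : τ ≤ 1 / 3) : log τ ≤ -1 := by
  rw [log_le_iff_le_exp hτ0, exp_neg]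
  exact hτ.trans (one_div (3 : ℝ) ▸ inv_anti₀ (exp_pos 1) exp_one_lt_three.le)

end Real

theorem mul_sum_sq_log_sub_log_le_sum_mul_log_div {ι : Type*} [Fintype ι] (p q : ι → ℝ) {τ : ℝ}
    (hτ0 : 0 < τ) (hp1 : ∑ i, p i = 1) (hq1 : ∑ i, q i = 1)
    (hp : ∀ i, τ ≤ p i) (hq : ∀ i, τ ≤ q i) :
    τ / 2 * ∑ i, (log (p i) - log (q i)) ^ 2 ≤ ∑ i, p i * log (p i / q i) := by
  have hterm : ∀ i, τ / 2 * (log (p i) - log (q i)) ^ 2 ≤ p i * log (p i / q i) - p i + q i :=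
    fun i ↦ calc
      τ / 2 * (log (p i) - log (q i)) ^ 2 ≤ min (p i) (q i) * (log (p i) - log (q i)) ^ 2 / 2 := by
        rw [div_mul_eq_mul_div, mul_div_right_comm, mul_div_right_comm _ _ (2 : ℝ)]
        gcongr
        exact le_min (hp i) (hq i)
      _ ≤ _ := min_mul_sq_log_sub_log_le (hτ0.trans_le (hp i)) (hτ0.trans_le (hq i))
  calc τ / 2 * ∑ i, (log (p i) - log (q i)) ^ 2
      ≤ ∑ i, (p i * log (p i / q i) - p i + q i) := by
        rw [mul_sum]
        exact sum_le_sum fun i _ ↦ hterm i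
    _ = ∑ i, p i * log (p i / q i) := by
        rw [sum_add_distrib, sum_sub_distrib, hp1, hq1]
        ring

theorem log_sq_sum_le_kl_of_both_tau_bounded {d : ℕ} (p q : Fin d → ℝ) (τ : ℝ)
    (hτ0 : 0 < τ) (hτ : τ ≤ 1/3)
    (hp1 : ∑ i, p i = 1) (hq1 : ∑ i, q i = 1)
    (hp : ∀ i, τ ≤ p i) (hq : ∀ i, τ ≤ q i) :
    ∑ i, (Real.log (p i) - Real.log (q i))^2 ≤
      4 * (Real.log τ)^2 / τ * ∑ i, p i * Real.log (p i / q i) := by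
  have hkl := mul_sum_sq_log_sub_log_le_sum_mul_log_div p q hτ0 hp1 hq1 hp hq
  have hkl_nonneg : 0 ≤ ∑ i, p i * log (p i / q i) := le_trans (by positivity) hkl
  have hconst : 2 ≤ 4 * log τ ^ 2 := by nlinarith [log_le_neg_one_of_le_one_third hτ0 hτ]
  calc ∑ i, (log (p i) - log (q i)) ^ 2 = 2 / τ * (τ / 2 * ∑ i, (log (p i) - log (q i)) ^ 2) := by
        field_simp
    _ ≤ 2 / τ * ∑ i, p i * log (p i / q i) := by gcongr
    _ ≤ 4 * log τ ^ 2 / τ * ∑ i, p i * log (p i / q i) := by gcongr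
end

section
/- Let p and q be probability distributions on a finite set with p_i ≥ τ for all i, for some 0 < τ ≤ 1/3. Then ∑_i (log p_i − log q_i)² ≤ (12 (log τ)² / τ) · KL(p‖q) + (9/τ²) · KL(p‖q)², where KL(p‖q) = ∑_i p_i log(p_i/q_i). -/
/-!
Write `x = log p - log q` and `g = q / p - 1 - log (q / p) ≥ 0`. The KL summand corrected by
`q - p` (which sums to zero) is `f = p log (p / q) - p + q = p g ≥ 0`. Applied at `log (q / p) = -x`,
the elementary inequality `x² ≤ 4 g + 4 g²` and `g ≤ f / τ` bound each `x²` by `4 f / τ + 4 f² / τ²`,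
and `∑ f² ≤ (∑ f)²` for nonnegative `f` turns the quadratic term into `KL²`. Finally
`log τ ≤ τ - 1 ≤ -2/3` makes `4 ≤ 12 (log τ)²`.
-/

open Real Finset

lemma sq_le_four_mul_exp_sub_one_sub_add_sq (x : ℝ) :
    x ^ 2 ≤ 4 * (exp x - 1 - x) + 4 * (exp x - 1 - x) ^ 2 := by
  have hg : 0 ≤ exp x - 1 - x := by linarith [add_one_le_exp x]
  rcases le_or_gt (-2) x with hx | hx
  · have hsq : (x / 2 + 1) ^ 2 ≤ exp x := by
      have h := pow_le_pow_left₀ (by linarith) (add_one_le_exp (x / 2)) 2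
      rwa [← exp_nat_mul, show ((2 : ℕ) : ℝ) * (x / 2) = x by ring] at h
    nlinarith
  · have hlin : -1 - x ≤ exp x - 1 - x := by linarith [exp_pos x]
    nlinarith

lemma mul_log_div_sub_add_nonneg {a b : ℝ} (ha : 0 < a) (hb : 0 < b) :
    0 ≤ a * log (a / b) - a + b := by
  have h := log_le_sub_one_of_pos (div_pos hb ha)
  rw [log_div hb.ne' ha.ne'] at h
  rw [log_div ha.ne' hb.ne']
  have hba : a * (b / a) = b := mul_div_cancel₀ b ha.ne'
  nlinarith

lemma sq_log_sub_log_le {a b τ : ℝ} (hτ : 0 < τ) (ha : τ ≤ a) (hb : 0 < b) :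
    (log a - log b) ^ 2 ≤
      4 / τ * (a * log (a / b) - a + b) + 4 / τ ^ 2 * (a * log (a / b) - a + b) ^ 2 := by
  have ha0 : 0 < a := hτ.trans_le ha
  set f := a * log (a / b) - a + b with hf_def
  have hf : 0 ≤ f := mul_log_div_sub_add_nonneg ha0 hb
  set g := f / a
  have hg : 0 ≤ g := div_nonneg hf ha0.le
  have hx : log (b / a) = -(log a - log b) := by rw [log_div hb.ne' ha0.ne']; ring
  have hgexp : exp (log (b / a)) - 1 - log (b / a) = g := by
    rw [exp_log (div_pos hb ha0), eq_div_iff ha0.ne', hx, hf_def, log_div ha0.ne' hb.ne']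
    field_simp
    ring
  have hkey := sq_le_four_mul_exp_sub_one_sub_add_sq (log (b / a))
  rw [hgexp, hx, neg_sq] at hkey
  have hgτ : g ≤ f / τ := div_le_div_of_nonneg_left hf hτ ha
  calc (log a - log b) ^ 2 ≤ 4 * g + 4 * g ^ 2 := hkey
    _ ≤ 4 * (f / τ) + 4 * (f / τ) ^ 2 := by gcongr
    _ = 4 / τ * f + 4 / τ ^ 2 * f ^ 2 := by ring

theorem log_sq_sum_le_kl_of_p_tau_bounded {d : ℕ} (p q : Fin d → ℝ) (τ : ℝ)
    (hτ0 : 0 < τ) (hτ : τ ≤ 1/3)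
    (hp1 : ∑ i, p i = 1) (hq1 : ∑ i, q i = 1)
    (hp : ∀ i, τ ≤ p i) (hq : ∀ i, 0 < q i) :
    ∑ i, (Real.log (p i) - Real.log (q i))^2 ≤
      12 * (Real.log τ)^2 / τ * (∑ i, p i * Real.log (p i / q i)) +
      9 / τ^2 * (∑ i, p i * Real.log (p i / q i))^2 := by
  set f := fun i ↦ p i * log (p i / q i) - p i + q i
  have hf : ∀ i, 0 ≤ f i := fun i ↦ mul_log_div_sub_add_nonneg (hτ0.trans_le (hp i)) (hq i)
  have hsum : ∑ i, f i = ∑ i, p i * log (p i / q i) := by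
    simp only [f, sum_add_distrib, sum_sub_distrib, hp1, hq1, sub_add_cancel]
  have hKL : 0 ≤ ∑ i, p i * log (p i / q i) := hsum ▸ sum_nonneg fun i _ ↦ hf i
  have hlogτ : 4 ≤ 12 * log τ ^ 2 := by nlinarith [log_le_sub_one_of_pos hτ0]
  calc ∑ i, (log (p i) - log (q i)) ^ 2
      ≤ ∑ i, (4 / τ * f i + 4 / τ ^ 2 * f i ^ 2) :=
        sum_le_sum fun i _ ↦ sq_log_sub_log_le hτ0 (hp i) (hq i)
    _ = 4 / τ * ∑ i, f i + 4 / τ ^ 2 * ∑ i, f i ^ 2 := by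
        rw [sum_add_distrib, mul_sum, mul_sum]
    _ ≤ 4 / τ * ∑ i, f i + 4 / τ ^ 2 * (∑ i, f i) ^ 2 := by
        gcongr
        exact sum_sq_le_sq_sum_of_nonneg fun i _ ↦ hf i
    _ ≤ 12 * log τ ^ 2 / τ * (∑ i, p i * log (p i / q i)) +
          9 / τ ^ 2 * (∑ i, p i * log (p i / q i)) ^ 2 := by
        rw [hsum]
        gcongr
        norm_num
end

section
/- For any two logit vectors u, u' ∈ ℝ^k, the squared Euclidean distance bounds twice the KL divergence of the induced softmax distributions: ‖u − u'‖² ≥ 2 · KL(softmax(u) ‖ softmax(u')). -/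
noncomputable def logPartition {k : ℕ} (v : Fin k → ℝ) : ℝ := ∑ i, Real.exp (v i)

noncomputable def softmax {k : ℕ} (v : Fin k → ℝ) : Fin k → ℝ :=
  fun i => Real.exp (v i) / logPartition v

noncomputable def klDiv {k : ℕ} (p q : Fin k → ℝ) : ℝ := ∑ i, p i * Real.log (p i / q i)

open Real Finset

/-- Key smoothness lemma: for a prob. vector `p` and reals `d`,
`log (∑ p i * exp (d i)) ≤ ∑ p i * d i + (∑ d i ^ 2) / 2`. -/
lemma key_smooth {k : ℕ} (p d : Fin k → ℝ) (hp : ∀ i, 0 ≤ p i)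
    (hsum : ∑ i, p i = 1) :
    Real.log (∑ i, p i * Real.exp (d i)) ≤ ∑ i, p i * d i + (∑ i, d i ^ 2) / 2 := by
  set a : ℝ := ∑ i, p i * d i with ha
  set C : ℝ := ∑ i, d i ^ 2 with hC
  set Z : ℝ → ℝ := fun t => ∑ i, p i * Real.exp (d i * t) with hZdef
  set Z' : ℝ → ℝ := fun t => ∑ i, p i * (Real.exp (d i * t) * d i) with hZ'def
  set Z'' : ℝ → ℝ := fun t => ∑ i, p i * (Real.exp (d i * t) * d i * d i) with hZ''def
  -- positivity of Z
  obtain ⟨i₀, hi₀⟩ : ∃ i, 0 < p i := by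
    by_contra h
    push_neg at h
    have : ∑ i, p i = 0 := le_antisymm (Finset.sum_nonpos fun i _ => h i)
      (Finset.sum_nonneg fun i _ => hp i)
    simp [this] at hsum
  have hZpos : ∀ t, 0 < Z t := by
    intro t
    have h1 : p i₀ * Real.exp (d i₀ * t) ≤ Z t :=
      Finset.single_le_sum (f := fun i => p i * Real.exp (d i * t))
        (fun i _ => mul_nonneg (hp i) (Real.exp_pos _).le) (Finset.mem_univ i₀)
    have h2 : 0 < p i₀ * Real.exp (d i₀ * t) := mul_pos hi₀ (Real.exp_pos _)
    linarith
  have hZne : ∀ t, Z t ≠ 0 := fun t => (hZpos t).ne'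
  -- derivatives
  have hZd : ∀ t, HasDerivAt Z (Z' t) t := by
    intro t
    have := HasDerivAt.fun_sum (u := Finset.univ) fun i (_ : i ∈ Finset.univ) =>
      ((((hasDerivAt_id t).const_mul (d i)).exp).const_mul (p i))
    simpa using this
  have hZ'd : ∀ t, HasDerivAt Z' (Z'' t) t := by
    intro t
    have := HasDerivAt.fun_sum (u := Finset.univ) fun i (_ : i ∈ Finset.univ) =>
      ((((((hasDerivAt_id t).const_mul (d i)).exp).mul_const (d i))).const_mul (p i))
    simpa using this
  -- bounds
  have hZ''le : ∀ t, Z'' t ≤ C * Z t := by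
    intro t
    have : ∀ i ∈ Finset.univ, p i * (Real.exp (d i * t) * d i * d i) ≤ d i ^ 2 * Z t := by
      intro i _
      have h1 : p i * Real.exp (d i * t) ≤ Z t :=
        Finset.single_le_sum (f := fun j => p j * Real.exp (d j * t))
          (fun j _ => mul_nonneg (hp j) (Real.exp_pos _).le) (Finset.mem_univ i)
      have h2 : 0 ≤ d i ^ 2 := sq_nonneg _
      calc p i * (Real.exp (d i * t) * d i * d i) = (p i * Real.exp (d i * t)) * d i ^ 2 := by ring
        _ ≤ Z t * d i ^ 2 := mul_le_mul_of_nonneg_right h1 h2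
        _ = d i ^ 2 * Z t := by ring
    calc Z'' t ≤ ∑ i, d i ^ 2 * Z t := Finset.sum_le_sum this
      _ = C * Z t := by rw [← Finset.sum_mul]
  -- h' and its derivative
  set g' : ℝ → ℝ := fun t => C * t + a - Z' t / Z t with hg'def
  have hg'd : ∀ t, HasDerivAt g' (C - (Z'' t * Z t - Z' t * Z' t) / (Z t) ^ 2) t := by
    intro t
    have h1 : HasDerivAt (fun t => Z' t / Z t) ((Z'' t * Z t - Z' t * Z' t) / (Z t) ^ 2) t :=
      (hZ'd t).div (hZd t) (hZne t)
    have h2 : HasDerivAt (fun t => C * t + a) C t := by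
      simpa using ((hasDerivAt_id t).const_mul C).add_const a
    exact h2.sub h1
  have hg''nonneg : ∀ t, 0 ≤ C - (Z'' t * Z t - Z' t * Z' t) / (Z t) ^ 2 := by
    intro t
    rw [sub_nonneg, div_le_iff₀ (pow_pos (hZpos t) 2)]
    have h1 : Z'' t * Z t ≤ C * Z t * Z t :=
      mul_le_mul_of_nonneg_right (hZ''le t) (hZpos t).le
    nlinarith [sq_nonneg (Z' t)]
  have hg'mono : Monotone g' :=
    monotone_of_deriv_nonneg (fun t => (hg'd t).differentiableAt)
      (fun t => by rw [(hg'd t).deriv]; exact hg''nonneg t)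
  have hZ0 : Z 0 = 1 := by simp [hZdef, hsum]
  have hZ'0 : Z' 0 = a := by simp [hZ'def, ha]
  have hg'0 : g' 0 = 0 := by simp [hg'def, hZ0, hZ'0]
  have hg'nonneg : ∀ t, 0 ≤ t → 0 ≤ g' t := fun t ht => hg'0 ▸ hg'mono ht
  -- h and its derivative
  set h : ℝ → ℝ := fun t => C / 2 * t ^ 2 + a * t - Real.log (Z t) with hhdef
  have hhd : ∀ t, HasDerivAt h (g' t) t := by
    intro t
    have h1 : HasDerivAt (fun t => Real.log (Z t)) (Z' t / Z t) t := (hZd t).log (hZne t)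
    have h2 : HasDerivAt (fun t : ℝ => C / 2 * t ^ 2 + a * t) (C * t + a) t := by
      have := ((hasDerivAt_pow 2 t).const_mul (C / 2)).add ((hasDerivAt_id t).const_mul a)
      refine this.congr_deriv ?_
      ring
    exact h2.sub h1
  have hhmono : MonotoneOn h (Set.Icc 0 1) := by
    apply monotoneOn_of_deriv_nonneg (convex_Icc 0 1)
      (fun t _ => (hhd t).continuousAt.continuousWithinAt)
      (fun t _ => ((hhd t).differentiableAt).differentiableWithinAt)
    intro t ht
    rw [(hhd t).deriv]
    rw [interior_Icc] at ht
    exact hg'nonneg t ht.1.le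
  have hkey : h 0 ≤ h 1 := hhmono (by norm_num) (by norm_num) zero_le_one
  have hh0 : h 0 = 0 := by simp [hhdef, hZ0]
  have hZ1 : Z 1 = ∑ i, p i * Real.exp (d i) := by simp [hZdef]
  have : 0 ≤ C / 2 + a - Real.log (Z 1) := by
    have := hkey
    rw [hh0] at this
    simpa [hhdef] using this
  rw [hZ1] at this
  linarith

theorem sq_dist_ge_two_kl {k : ℕ} (u u' : Fin k → ℝ) :
    2 * klDiv (softmax u) (softmax u') ≤ ∑ i, (u i - u' i)^2 := by
  rcases Nat.eq_zero_or_pos k with hk | hk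
  · subst hk
    simp [klDiv]
  · have : Nonempty (Fin k) := Fin.pos_iff_nonempty.mp hk
    have hne : (Finset.univ : Finset (Fin k)).Nonempty := Finset.univ_nonempty
    have hZu : 0 < logPartition u :=
      Finset.sum_pos (fun i _ => Real.exp_pos _) hne
    have hZu' : 0 < logPartition u' :=
      Finset.sum_pos (fun i _ => Real.exp_pos _) hne
    set p : Fin k → ℝ := softmax u with hpdef
    have hp : ∀ i, 0 ≤ p i := fun i => div_nonneg (Real.exp_pos _).le hZu.le
    have hpsum : ∑ i, p i = 1 := by
      simp only [hpdef, softmax]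
      rw [← Finset.sum_div]
      exact div_self hZu.ne'
    set d : Fin k → ℝ := fun i => u' i - u i with hddef
    -- ∑ p i * exp (d i) = Z u' / Z u
    have hratio : ∑ i, p i * Real.exp (d i) = logPartition u' / logPartition u := by
      unfold logPartition
      rw [Finset.sum_div]
      apply Finset.sum_congr rfl
      intro i _
      simp only [hpdef, softmax, hddef, logPartition]
      rw [div_mul_eq_mul_div, ← Real.exp_add]
      have : u i + (u' i - u i) = u' i := by ring
      rw [this]
    have hkl : klDiv (softmax u) (softmax u') =
        -∑ i, p i * d i + (Real.log (logPartition u') - Real.log (logPartition u)) := by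
      unfold klDiv
      have : ∀ i ∈ Finset.univ, p i * Real.log (softmax u i / softmax u' i) =
          p i * (-d i) + p i * (Real.log (logPartition u') - Real.log (logPartition u)) := by
        intro i _
        have h1 : softmax u i / softmax u' i =
            Real.exp (-d i) * (logPartition u' / logPartition u) := by
          simp only [softmax, hddef]
          rw [Real.exp_neg, Real.exp_sub]
          field_simp
        rw [h1, Real.log_mul (Real.exp_pos _).ne' (by positivity), Real.log_exp,
          Real.log_div hZu'.ne' hZu.ne']
        ring
      rw [Finset.sum_congr rfl this, Finset.sum_add_distrib, ← Finset.sum_mul, hpsum, one_mul]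
      simp [mul_neg, Finset.sum_neg_distrib]
    have hbound := key_smooth p d hp hpsum
    rw [hratio, Real.log_div hZu'.ne' hZu.ne'] at hbound
    have hC : ∑ i, d i ^ 2 = ∑ i, (u i - u' i) ^ 2 := by
      apply Finset.sum_congr rfl
      intro i _
      simp only [hddef]
      ring
    rw [hkl]
    rw [← hC]
    linarith
end

section
/- Let u, u' ∈ ℝ^k be centered logit vectors (components summing to zero) such that both softmax(u) and softmax(u') have all entries ≥ τ for some 0 < τ < 1/3. Then ‖u − u'‖² ≤ (4 (log τ)² / τ) · KL(softmax(u) ‖ softmax(u')). -/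
open Real


lemma psi_deriv (c : ℝ) :
    ∀ y : ℝ, HasDerivAt (fun x : ℝ => x * Real.exp x - Real.exp x + 1 - c * x ^ 2)
      (y * Real.exp y - 2 * c * y) y := by
  intro y
  have h1 : HasDerivAt (fun x : ℝ => x * Real.exp x) (1 * Real.exp y + y * Real.exp y) y :=
    (hasDerivAt_id y).mul (Real.hasDerivAt_exp y)
  have h2 : HasDerivAt (fun x : ℝ => c * x ^ 2) (c * (2 * y ^ 1)) y :=
    ((hasDerivAt_pow 2 y)).const_mul c
  have := ((h1.sub (Real.hasDerivAt_exp y)).add_const 1).sub h2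
  exact this.congr_deriv (by ring)

lemma log_three_gt_one : (1:ℝ) < Real.log 3 := by
  rw [Real.lt_log_iff_exp_lt (by norm_num)]
  have := Real.exp_one_lt_d9
  linarith

lemma log_three_le : Real.log 3 ≤ 5/4 := by
  rw [Real.log_le_iff_le_exp (by norm_num)]
  have h : Real.exp (5/4 : ℝ) = Real.exp 1 * Real.exp (1/4) := by
    rw [← Real.exp_add]; norm_num
  have h1 := Real.exp_one_gt_d9
  have h2 : (1/4 : ℝ) + 1 ≤ Real.exp (1/4) := Real.add_one_le_exp _
  nlinarith

lemma endpoint_bound (L : ℝ) (hL : Real.log 3 ≤ L) : (L + 1) * Real.exp (-L) ≤ 3/4 := by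
  have h3 : Real.exp L = 3 * Real.exp (L - Real.log 3) := by
    rw [← Real.exp_log (show (0:ℝ) < 3 by norm_num), ← Real.exp_add]
    congr 1
    rw [Real.exp_log (show (0:ℝ) < 3 by norm_num)]
    ring
  have h4 : (L - Real.log 3) + 1 ≤ Real.exp (L - Real.log 3) := Real.add_one_le_exp _
  have h5 : L + 1 ≤ (3/4) * Real.exp L := by
    have := log_three_le
    nlinarith
  have h6 : (0:ℝ) < Real.exp (-L) := Real.exp_pos _
  have h7 : Real.exp L * Real.exp (-L) = 1 := by rw [← Real.exp_add]; simp
  nlinarith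

lemma aux_pos (x : ℝ) (hx : 0 ≤ x) : x ^ 2 / 2 ≤ x * Real.exp x - Real.exp x + 1 := by
  set f : ℝ → ℝ := fun x => x * Real.exp x - Real.exp x + 1 - (1/2 : ℝ) * x ^ 2 with hf
  have hd := psi_deriv (1/2 : ℝ)
  have hmono : MonotoneOn f (Set.Ici (0:ℝ)) := by
    apply monotoneOn_of_deriv_nonneg (convex_Ici 0)
    · exact fun y _ => ((hd y).continuousAt).continuousWithinAt
    · exact fun y _ => ((hd y).differentiableAt).differentiableWithinAt
    · intro y hy
      rw [interior_Ici] at hy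
      rw [(hd y).deriv]
      have h1 : 1 ≤ Real.exp y := Real.one_le_exp (le_of_lt hy)
      nlinarith [(le_of_lt hy : (0:ℝ) ≤ y)]
  have h0 : f 0 ≤ f x := hmono (Set.self_mem_Ici) hx hx
  simp [hf] at h0
  nlinarith [h0]


lemma aux_neg (L x : ℝ) (hL : Real.log 3 ≤ L) (hx1 : -L ≤ x) (hx2 : x ≤ 0) :
    x ^ 2 / (4 * L ^ 2) ≤ x * Real.exp x - Real.exp x + 1 := by
  have hL1 : (1:ℝ) < L := lt_of_lt_of_le log_three_gt_one hL
  have hL0 : (0:ℝ) < L := by linarith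
  set c : ℝ := 1 / (4 * L ^ 2) with hc
  have hc0 : 0 < c := by positivity
  set c2 : ℝ := 2 * c with hc2
  have hc2v : c2 = 1 / (2 * L ^ 2) := by rw [hc2, hc]; ring
  have hc2lt : c2 < 1 := by
    rw [hc2v]
    rw [div_lt_one (by positivity)]
    nlinarith
  have hc20 : 0 < c2 := by positivity
  have hlogc2 : Real.log c2 < 0 := Real.log_neg hc20 hc2lt
  set f : ℝ → ℝ := fun x => x * Real.exp x - Real.exp x + 1 - c * x ^ 2 with hf
  have hd := psi_deriv c
  have hderiv : ∀ y : ℝ, deriv f y = y * (Real.exp y - c2) := by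
    intro y
    rw [(hd y).deriv, hc2]; ring
  -- endpoint value
  have hend : 0 ≤ f (-L) := by
    have := endpoint_bound L hL
    have hfl : f (-L) = 1 - (L + 1) * Real.exp (-L) - c * L ^ 2 := by
      simp only [hf]; ring
    have hcl : c * L ^ 2 = 1/4 := by
      rw [hc]; field_simp
    rw [hfl, hcl]; linarith
  rcases le_or_gt (Real.log c2) x with hcase | hcase
  · -- antitone on [log c2, 0]
    have hanti : AntitoneOn f (Set.Icc (Real.log c2) 0) := by
      apply antitoneOn_of_deriv_nonpos (convex_Icc _ _)
      · exact fun y _ => ((hd y).continuousAt).continuousWithinAt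
      · exact fun y hy => ((hd y).differentiableAt).differentiableWithinAt
      · intro y hy
        rw [interior_Icc] at hy
        rw [hderiv]
        have h1 : c2 < Real.exp y := by
          rw [← Real.exp_log hc20]
          exact Real.exp_lt_exp.mpr hy.1
        have h2 : y < 0 := hy.2
        nlinarith
    have h0 : f 0 ≤ f x := hanti ⟨hcase, hx2⟩ ⟨le_of_lt hlogc2, le_refl 0⟩ hx2
    have hf0 : f 0 = 0 := by simp [hf]
    rw [hf0] at h0
    have : c * x ^ 2 = x ^ 2 / (4 * L ^ 2) := by rw [hc]; ring
    simp only [hf] at h0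
    linarith [h0, this.symm.le]
  · -- monotone on [-L, log c2]
    have hmono : MonotoneOn f (Set.Icc (-L) (Real.log c2)) := by
      apply monotoneOn_of_deriv_nonneg (convex_Icc _ _)
      · exact fun y _ => ((hd y).continuousAt).continuousWithinAt
      · exact fun y hy => ((hd y).differentiableAt).differentiableWithinAt
      · intro y hy
        rw [interior_Icc] at hy
        rw [hderiv]
        have h1 : Real.exp y < c2 := by
          rw [← Real.exp_log hc20]
          exact Real.exp_lt_exp.mpr hy.2
        have h2 : y < 0 := lt_trans hy.2 hlogc2
        nlinarith
    have h0 : f (-L) ≤ f x := hmono ⟨le_refl _, by linarith⟩ ⟨hx1, le_of_lt hcase⟩ hx1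
    have : c * x ^ 2 = x ^ 2 / (4 * L ^ 2) := by rw [hc]; ring
    simp only [hf] at h0 hend
    linarith [this.symm.le]

lemma scalar_key (τ p q : ℝ) (hτ0 : 0 < τ) (hτ : τ < 1/3) (hp1 : τ ≤ p) (hp2 : p ≤ 1)
    (hq1 : τ ≤ q) (hq2 : q ≤ 1) :
    (Real.log p - Real.log q) ^ 2 ≤
      4 * (Real.log τ) ^ 2 / τ * (p * Real.log (p / q) - p + q) := by
  have hp0 : 0 < p := lt_of_lt_of_le hτ0 hp1
  have hq0 : 0 < q := lt_of_lt_of_le hτ0 hq1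
  set L : ℝ := -Real.log τ with hLdef
  have hLlog3 : Real.log 3 ≤ L := by
    rw [hLdef, ← Real.log_inv]
    apply Real.log_le_log (by norm_num)
    rw [le_inv_comm₀ (by norm_num) hτ0] at *
    · linarith [hτ]
  have hL1 : (1:ℝ) < L := lt_of_lt_of_le log_three_gt_one hLlog3
  have hL2 : Real.log τ ^ 2 = L ^ 2 := by rw [hLdef]; ring
  set x : ℝ := Real.log p - Real.log q with hxdef
  have hlp1 : Real.log τ ≤ Real.log p := Real.log_le_log hτ0 hp1
  have hlp2 : Real.log p ≤ 0 := Real.log_nonpos (le_of_lt hp0) hp2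
  have hlq1 : Real.log τ ≤ Real.log q := Real.log_le_log hτ0 hq1
  have hlq2 : Real.log q ≤ 0 := Real.log_nonpos (le_of_lt hq0) hq2
  have hx1 : -L ≤ x := by rw [hLdef, hxdef]; linarith
  have hx2 : x ≤ L := by rw [hLdef, hxdef]; linarith
  have hpq : p = q * Real.exp x := by
    rw [hxdef, Real.exp_sub, Real.exp_log hp0, Real.exp_log hq0]
    field_simp
  have hlogdiv : Real.log (p / q) = x := Real.log_div (ne_of_gt hp0) (ne_of_gt hq0)
  have hkey : x ^ 2 / (4 * L ^ 2) ≤ x * Real.exp x - Real.exp x + 1 := by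
    rcases le_or_gt 0 x with hx0 | hx0
    · have := aux_pos x hx0
      have h1 : x ^ 2 / (4 * L ^ 2) ≤ x ^ 2 / 2 := by
        apply div_le_div_of_nonneg_left (by positivity) (by norm_num)
        nlinarith
      linarith
    · exact aux_neg L x hLlog3 hx1 (le_of_lt hx0)
  set ψ : ℝ := x * Real.exp x - Real.exp x + 1 with hψdef
  have hψ0 : 0 ≤ ψ := le_trans (by positivity) hkey
  have hterm : p * Real.log (p / q) - p + q = q * ψ := by
    rw [hlogdiv, hψdef]
    rw [hpq]
    ring
  rw [hterm, hL2]
  have h1 : x ^ 2 ≤ 4 * L ^ 2 * ψ := by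
    rw [div_le_iff₀ (by positivity)] at hkey
    linarith [hkey]
  have h2 : τ * ψ ≤ q * ψ := mul_le_mul_of_nonneg_right hq1 hψ0
  have h3 : 4 * L ^ 2 / τ * (τ * ψ) = 4 * L ^ 2 * ψ := by field_simp
  have h4 : 4 * L ^ 2 / τ * (τ * ψ) ≤ 4 * L ^ 2 / τ * (q * ψ) :=
    mul_le_mul_of_nonneg_left h2 (by positivity)
  calc x ^ 2 ≤ 4 * L ^ 2 * ψ := h1
    _ = 4 * L ^ 2 / τ * (τ * ψ) := h3.symm
    _ ≤ 4 * L ^ 2 / τ * (q * ψ) := h4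

lemma softmax_le_one {k : ℕ} (hk : 0 < k) (v : Fin k → ℝ) (i : Fin k) : softmax v i ≤ 1 := by
  have : Nonempty (Fin k) := ⟨⟨0, hk⟩⟩
  have hZ : 0 < logPartition v :=
    Finset.sum_pos (fun j _ => Real.exp_pos _) Finset.univ_nonempty
  rw [softmax, div_le_one hZ]
  exact Finset.single_le_sum (f := fun j => Real.exp (v j))
    (fun j _ => (Real.exp_pos _).le) (Finset.mem_univ i)

lemma softmax_sum_one {k : ℕ} (hk : 0 < k) (v : Fin k → ℝ) : ∑ i, softmax v i = 1 := by
  have : Nonempty (Fin k) := ⟨⟨0, hk⟩⟩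
  have hZ : 0 < logPartition v :=
    Finset.sum_pos (fun j _ => Real.exp_pos _) Finset.univ_nonempty
  simp only [softmax]
  rw [← Finset.sum_div, ← logPartition, div_self (ne_of_gt hZ)]

lemma log_softmax {k : ℕ} (hk : 0 < k) (v : Fin k → ℝ) (i : Fin k) :
    Real.log (softmax v i) = v i - Real.log (logPartition v) := by
  have : Nonempty (Fin k) := ⟨⟨0, hk⟩⟩
  have hZ : 0 < logPartition v :=
    Finset.sum_pos (fun j _ => Real.exp_pos _) Finset.univ_nonempty
  rw [softmax, Real.log_div (Real.exp_ne_zero _) (ne_of_gt hZ), Real.log_exp]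

theorem sq_logit_dist_le_kl_of_tau_bounded {k : ℕ} (u u' : Fin k → ℝ) (τ : ℝ)
    (hτ0 : 0 < τ) (hτ : τ < 1/3)
    (hu : ∑ i, u i = 0) (hu' : ∑ i, u' i = 0)
    (hp : ∀ i, τ ≤ softmax u i) (hq : ∀ i, τ ≤ softmax u' i) :
    ∑ i, (u i - u' i)^2 ≤
      4 * (Real.log τ)^2 / τ * klDiv (softmax u) (softmax u') := by
  rcases Nat.eq_zero_or_pos k with hk | hk
  · subst hk
    simp [klDiv]
  set p := softmax u with hpdef
  set q := softmax u' with hqdef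
  set b : ℝ := Real.log (logPartition u) - Real.log (logPartition u') with hbdef
  set d : Fin k → ℝ := fun i => Real.log (p i) - Real.log (q i) with hddef
  have hdi : ∀ i, u i - u' i = d i + b := by
    intro i
    rw [hddef]
    simp only [hpdef, hqdef, log_softmax hk, hbdef]
    ring
  have hsumd : ∑ i, d i = -(k * b) := by
    have : ∑ i, d i = ∑ i, ((u i - u' i) - b) := by
      apply Finset.sum_congr rfl
      intro i _
      rw [hdi i]; ring
    rw [this, Finset.sum_sub_distrib, Finset.sum_sub_distrib, hu, hu',
      Finset.sum_const, Finset.card_univ, Fintype.card_fin, nsmul_eq_mul]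
    ring
  have hstep1 : ∑ i, (u i - u' i)^2 ≤ ∑ i, d i ^ 2 := by
    have hexp : ∑ i, (u i - u' i)^2 = (∑ i, d i ^ 2) + 2 * b * (∑ i, d i) + k * b^2 := by
      have : ∀ i, (u i - u' i)^2 = d i ^ 2 + 2 * b * d i + b ^ 2 := by
        intro i; rw [hdi i]; ring
      rw [Finset.sum_congr rfl (fun i _ => this i), Finset.sum_add_distrib,
        Finset.sum_add_distrib, ← Finset.mul_sum, Finset.sum_const, Finset.card_univ,
        Fintype.card_fin, nsmul_eq_mul]
    rw [hexp, hsumd]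
    have : (0:ℝ) ≤ k * b ^ 2 := by positivity
    nlinarith
  have hstep2 : ∑ i, d i ^ 2 ≤
      4 * (Real.log τ)^2 / τ * ∑ i, (p i * Real.log (p i / q i) - p i + q i) := by
    rw [Finset.mul_sum]
    apply Finset.sum_le_sum
    intro i _
    exact scalar_key τ (p i) (q i) hτ0 hτ (hp i) (softmax_le_one hk u i)
      (hq i) (softmax_le_one hk u' i)
  have hsum3 : ∑ i, (p i * Real.log (p i / q i) - p i + q i) = klDiv p q := by
    rw [klDiv]
    rw [Finset.sum_add_distrib, Finset.sum_sub_distrib, softmax_sum_one hk, softmax_sum_one hk]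
    ring
  rw [hsum3] at hstep2
  exact le_trans hstep1 hstep2
end

section
/- Von Neumann-type trace inequality for PSD matrices: if A, B ∈ ℝ^{m×m} are symmetric positive semidefinite with eigenvalues a₁ ≥ … ≥ a_m and b₁ ≥ … ≥ b_m, then ∑_{i=1}^m a_i b_{m+1−i} ≤ tr(AB) ≤ ∑_{i=1}^m a_i b_i. -/
open Matrix Finset

lemma ds_sum_bounds {m : ℕ} (a b : Fin m → ℝ) (ha : Antitone a) (hb : Antitone b)
    (D : Matrix (Fin m) (Fin m) ℝ) (hD : D ∈ doublyStochastic ℝ (Fin m)) :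
    (∑ i, a i * b i.rev) ≤ (∑ i, ∑ j, a i * b j * D i j) ∧
      (∑ i, ∑ j, a i * b j * D i j) ≤ ∑ i, a i * b i := by
  obtain ⟨w, hw0, hw1, hwD⟩ := exists_eq_sum_perm_of_mem_doublyStochastic hD
  have hD' : ∀ i j, D i j = ∑ σ : Equiv.Perm (Fin m), w σ * (if σ i = j then 1 else 0) := by
    intro i j
    rw [← hwD]
    simp [Equiv.Perm.permMatrix, PEquiv.toMatrix_apply, Equiv.toPEquiv_apply, Matrix.sum_apply]
  have key : (∑ i, ∑ j, a i * b j * D i j) = ∑ σ : Equiv.Perm (Fin m), w σ * ∑ i, a i * b (σ i) := by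
    have : ∀ i, (∑ j, a i * b j * D i j) = ∑ σ : Equiv.Perm (Fin m), w σ * (a i * b (σ i)) := by
      intro i
      simp only [hD', Finset.mul_sum]
      rw [Finset.sum_comm]
      refine Finset.sum_congr rfl fun σ _ => ?_
      rw [Finset.sum_eq_single (σ i)]
      · simp; ring
      · intro j _ hj; rw [if_neg (Ne.symm hj)]; ring
      · simp
    simp only [this, Finset.mul_sum]
    rw [Finset.sum_comm]
  have hmono : Monotone (fun i : Fin m => b i.rev) := by
    intro i j hij
    exact hb (by simpa using Fin.rev_le_rev.mpr hij)
  constructor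
  · rw [key]
    calc (∑ i, a i * b i.rev) = (∑ σ : Equiv.Perm (Fin m), w σ) * ∑ i, a i * b i.rev := by
          rw [hw1, one_mul]
      _ = ∑ σ : Equiv.Perm (Fin m), w σ * ∑ i, a i * b i.rev := by rw [Finset.sum_mul]
      _ ≤ ∑ σ : Equiv.Perm (Fin m), w σ * ∑ i, a i * b (σ i) := by
          refine Finset.sum_le_sum fun σ _ => mul_le_mul_of_nonneg_left ?_ (hw0 σ)
          have hav : Antivary a (fun i : Fin m => b i.rev) := ha.antivary hmono
          have := hav.sum_mul_le_sum_mul_comp_perm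
            (σ := σ.trans (Fin.revPerm : Equiv.Perm (Fin m)))
          simpa [Fin.rev_rev] using this
  · rw [key]
    calc ∑ σ : Equiv.Perm (Fin m), w σ * ∑ i, a i * b (σ i)
        ≤ ∑ σ : Equiv.Perm (Fin m), w σ * ∑ i, a i * b i := by
          refine Finset.sum_le_sum fun σ _ => mul_le_mul_of_nonneg_left ?_ (hw0 σ)
          exact (ha.monovary hb).sum_mul_comp_perm_le_sum_mul
      _ = ∑ i, a i * b i := by rw [← Finset.sum_mul, hw1, one_mul]

theorem vonNeumann_trace_inequality {m : ℕ}
    (A B Q R : Matrix (Fin m) (Fin m) ℝ) (a b : Fin m → ℝ)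
    (hQ : Q * Qᵀ = 1) (hR : R * Rᵀ = 1)
    (hA : A = Qᵀ * Matrix.diagonal a * Q) (hB : B = Rᵀ * Matrix.diagonal b * R)
    (ha : Antitone a) (hb : Antitone b)
    (ha0 : ∀ i, 0 ≤ a i) (hb0 : ∀ i, 0 ≤ b i) :
    (∑ i, a i * b i.rev) ≤ (A * B).trace ∧ (A * B).trace ≤ ∑ i, a i * b i := by
  have hQ' : Qᵀ * Q = 1 := mul_eq_one_comm.mp hQ
  have hR' : Rᵀ * R = 1 := mul_eq_one_comm.mp hR
  set S : Matrix (Fin m) (Fin m) ℝ := Q * Rᵀ with hS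
  have hS1 : S * Sᵀ = 1 := by
    rw [hS, Matrix.transpose_mul, Matrix.transpose_transpose]
    rw [Matrix.mul_assoc Q, ← Matrix.mul_assoc Rᵀ, hR', Matrix.one_mul, hQ]
  have hS2 : Sᵀ * S = 1 := mul_eq_one_comm.mp hS1
  set D : Matrix (Fin m) (Fin m) ℝ := Matrix.of fun i j => (S i j) ^ 2 with hDdef
  have htr : (A * B).trace = ∑ i, ∑ j, a i * b j * D i j := by
    have : A * B = Qᵀ * (Matrix.diagonal a * S * Matrix.diagonal b * Sᵀ * Q) := by
      rw [hA, hB, hS, Matrix.transpose_mul, Matrix.transpose_transpose]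
      simp only [Matrix.mul_assoc]
      rw [hQ', Matrix.mul_one]
    rw [this, Matrix.trace_mul_comm, Matrix.mul_assoc, Matrix.mul_assoc, hQ, Matrix.mul_one]
    rw [Matrix.trace]
    refine Finset.sum_congr rfl fun i _ => ?_
    rw [Matrix.diag]
    rw [show Matrix.diagonal a * S * Matrix.diagonal b * Sᵀ
        = (Matrix.diagonal a * S * Matrix.diagonal b) * Sᵀ from rfl, Matrix.mul_apply]
    refine Finset.sum_congr rfl fun j _ => ?_
    rw [Matrix.mul_diagonal, Matrix.diagonal_mul, Matrix.transpose_apply]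
    simp only [hDdef, Matrix.of_apply]
    ring
  have hDmem : D ∈ doublyStochastic ℝ (Fin m) := by
    rw [mem_doublyStochastic_iff_sum]
    refine ⟨fun i j => sq_nonneg _, fun i => ?_, fun j => ?_⟩
    · have := congrFun (congrFun hS1 i) i
      simpa [Matrix.mul_apply, sq, hDdef] using this
    · have := congrFun (congrFun hS2 j) j
      simpa [Matrix.mul_apply, sq, hDdef, mul_comm] using this
  rw [htr]
  exact ds_sum_bounds a b ha hb D hDmem
end
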